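/- arXiv:2602.02424 — 3 statements merged into one kernel-verified Lean document; each statement's English description precedes it below -/
import Mathlib

section
/- Let φ be a positive C² function on an interval I ⊂ (0,∞) satisfying the ODE φ'' = -φ'(1+(φ')²)(n s/φ² + (n-1)/s). If φ'(s₀) > 0 at some s₀ ∈ I, then φ' > 0 on all of I; likewise if φ'(s₀) < 0 then φ' < 0 on I, and if φ'(s₀) = 0 then φ is constant on I. -/
open Set

/-- Gronwall-type vanishing: if `|ψ'| ≤ K|ψ|` on `[c,d]` and `ψ c = 0`, then `ψ ≡ 0`. -/
lemma ode_zero_forward {ψ ψ' : ℝ → ℝ} {c d K : ℝ} (hc : c ≤ d)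
    (hψc : ContinuousOn ψ (Icc c d))
    (hψd : ∀ t ∈ Ico c d, HasDerivWithinAt ψ (ψ' t) (Ici t) t)
    (hbound : ∀ t ∈ Ico c d, |ψ' t| ≤ K * |ψ t|)
    (h0 : ψ c = 0) : ∀ t ∈ Icc c d, ψ t = 0 := by
  intro t ht
  have := norm_le_gronwallBound_of_norm_deriv_right_le (δ := 0) (K := K) (ε := 0)
    hψc hψd (by simp [h0]) (fun s hs => by simpa using hbound s hs) t ht
  rw [gronwallBound_ε0_δ0] at this
  have h2 : |ψ t| ≤ 0 := by simpa using this
  exact abs_eq_zero.mp (le_antisymm h2 (abs_nonneg _))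

lemma ode_zero_backward {ψ ψ' : ℝ → ℝ} {c d K : ℝ} (hc : c ≤ d)
    (hψc : ContinuousOn ψ (Icc c d))
    (hψd : ∀ t ∈ Icc c d, HasDerivAt ψ (ψ' t) t)
    (hbound : ∀ t ∈ Icc c d, |ψ' t| ≤ K * |ψ t|)
    (h0 : ψ d = 0) : ∀ t ∈ Icc c d, ψ t = 0 := by
  set g : ℝ → ℝ := fun t => ψ (c + d - t) with hg
  have hmem : ∀ t ∈ Icc c d, c + d - t ∈ Icc c d := by
    intro t ht; constructor <;> [linarith [ht.2]; linarith [ht.1]]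
  have hgc : ContinuousOn g (Icc c d) := by
    apply hψc.comp (Continuous.continuousOn (by continuity)) hmem
  have hgd : ∀ t ∈ Ico c d, HasDerivWithinAt g (-(ψ' (c + d - t))) (Ici t) t := by
    intro t ht
    have h1 : HasDerivAt (fun t : ℝ => c + d - t) (-1) t := by
      simpa using (hasDerivAt_id t).const_sub (c + d)
    have := (hψd _ (hmem t (Ico_subset_Icc_self ht))).comp t h1
    simpa [mul_comm, g, Function.comp_def] using this.hasDerivWithinAt
  have hzero : ∀ t ∈ Icc c d, g t = 0 := by
    apply ode_zero_forward hc hgc hgd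
    · intro t ht
      simpa [g, abs_neg] using hbound _ (hmem t (Ico_subset_Icc_self ht))
    · simpa [g] using h0
  intro t ht
  have := hzero (c + d - t) (hmem t ht)
  simpa [g, show c + d - (c + d - t) = t by ring] using this

/-- Sign preservation for `φ'` along the vertical rotational translator ODE
`φ'' = -φ'(1+(φ')²)(n s/φ² + (n-1)/s)` in `ℍ^{n+1}`: on an open interval
`I = Ioo a b ⊂ (0,∞)`, if `φ'` is positive (resp. negative, zero) at one point,
then it is positive (resp. negative, identically zero, i.e. `φ` constant) on all of `I`. -/
theorem vertical_rotational_ODE_sign_preservation (n : ℕ) (hn : 2 ≤ n)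
    (a b : ℝ) (ha : 0 ≤ a) (hab : a < b) (φ : ℝ → ℝ)
    (hreg : ContDiffOn ℝ 2 φ (Ioo a b))
    (hpos : ∀ s ∈ Ioo a b, 0 < φ s)
    (hODE : ∀ s ∈ Ioo a b, deriv (deriv φ) s =
      -(deriv φ s) * (1 + (deriv φ s) ^ 2) *
        ((n : ℝ) * s / (φ s) ^ 2 + ((n : ℝ) - 1) / s))
    (s₀ : ℝ) (hs₀ : s₀ ∈ Ioo a b) :
    (0 < deriv φ s₀ → ∀ s ∈ Ioo a b, 0 < deriv φ s) ∧
    (deriv φ s₀ < 0 → ∀ s ∈ Ioo a b, deriv φ s < 0) ∧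
    (deriv φ s₀ = 0 → ∀ s ∈ Ioo a b, φ s = φ s₀) := by
  have hopen : IsOpen (Ioo a b) := isOpen_Ioo
  have hψ1 : ContDiffOn ℝ 1 (deriv φ) (Ioo a b) :=
    hreg.deriv_of_isOpen hopen (by norm_num)
  have hψc : ContinuousOn (deriv φ) (Ioo a b) := hψ1.continuousOn
  have hψd : ∀ s ∈ Ioo a b, HasDerivAt (deriv φ) (deriv (deriv φ) s) s := by
    intro s hs
    exact ((hψ1.differentiableOn (by norm_num) s hs).differentiableAt
      (hopen.mem_nhds hs)).hasDerivAt
  -- key vanishing lemma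
  have key : ∀ t₁ ∈ Ioo a b, deriv φ t₁ = 0 → ∀ s ∈ Ioo a b, deriv φ s = 0 := by
    intro t₁ ht₁ h0 s hs
    set c := min t₁ s with hc
    set d := max t₁ s with hd
    have hcd : c ≤ d := min_le_max
    have hsub : Icc c d ⊆ Ioo a b := by
      intro x hx
      constructor
      · exact lt_of_lt_of_le (lt_min ht₁.1 hs.1) hx.1
      · exact lt_of_le_of_lt hx.2 (max_lt ht₁.2 hs.2)
    have hcompact : IsCompact (Icc c d) := isCompact_Icc
    -- bound on ψ
    obtain ⟨M, hM⟩ := hcompact.exists_bound_of_continuousOn (hψc.mono hsub)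
    -- bound on F
    have hxpos : ∀ x ∈ Icc c d, 0 < x := fun x hx => lt_of_le_of_lt ha (hsub hx).1
    have hFcont : ContinuousOn (fun t => (n : ℝ) * t / (φ t) ^ 2 + ((n : ℝ) - 1) / t)
        (Icc c d) := by
      apply ContinuousOn.add
      · exact (continuousOn_const.mul continuousOn_id).div
          ((hreg.continuousOn.mono hsub).pow 2)
          (fun x hx => pow_ne_zero _ (ne_of_gt (hpos x (hsub hx))))
      · exact continuousOn_const.div continuousOn_id
          (fun x hx => ne_of_gt (hxpos x hx))
    obtain ⟨L, hL⟩ := hcompact.exists_bound_of_continuousOn hFcont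
    have hMnn : 0 ≤ M := le_trans (norm_nonneg _) (hM c ⟨le_rfl, hcd⟩)
    have hLnn : 0 ≤ L := le_trans (norm_nonneg _) (hL c ⟨le_rfl, hcd⟩)
    set K := (1 + M ^ 2) * L with hK
    have hbound : ∀ t ∈ Icc c d, |deriv (deriv φ) t| ≤ K * |deriv φ t| := by
      intro t ht
      rw [hODE t (hsub ht)]
      have h1 : |deriv φ t| ≤ M := hM t ht
      have h2 : |(n : ℝ) * t / (φ t) ^ 2 + ((n : ℝ) - 1) / t| ≤ L := hL t ht
      have e : |-(deriv φ t) * (1 + (deriv φ t) ^ 2) *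
          ((n : ℝ) * t / (φ t) ^ 2 + ((n : ℝ) - 1) / t)| =
          |deriv φ t| * (1 + (deriv φ t) ^ 2) *
          |(n : ℝ) * t / (φ t) ^ 2 + ((n : ℝ) - 1) / t| := by
        rw [abs_mul, abs_mul, abs_neg, abs_of_pos (by positivity : (0:ℝ) < 1 + (deriv φ t) ^ 2)]
      rw [e]
      have h3 : 1 + (deriv φ t) ^ 2 ≤ 1 + M ^ 2 := by
        nlinarith [abs_nonneg (deriv φ t), sq_abs (deriv φ t)]
      calc |deriv φ t| * (1 + (deriv φ t) ^ 2) *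
            |(n : ℝ) * t / (φ t) ^ 2 + ((n : ℝ) - 1) / t|
          ≤ |deriv φ t| * (1 + M ^ 2) * L := by
            apply mul_le_mul (by nlinarith [abs_nonneg (deriv φ t)]) h2 (abs_nonneg _)
            positivity
        _ = K * |deriv φ t| := by ring
    have hψcd : ContinuousOn (deriv φ) (Icc c d) := hψc.mono hsub
    have hψdd : ∀ t ∈ Icc c d, HasDerivAt (deriv φ) (deriv (deriv φ) t) t :=
      fun t ht => hψd t (hsub ht)
    rcases le_total t₁ s with h | h
    · have hc' : c = t₁ := min_eq_left h
      have hd' : d = s := max_eq_right h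
      exact ode_zero_forward hcd hψcd
        (fun t ht => (hψdd t (Ico_subset_Icc_self ht)).hasDerivWithinAt)
        (fun t ht => hbound t (Ico_subset_Icc_self ht))
        (by rw [hc']; exact h0) s (by rw [hc', hd']; exact ⟨h, le_rfl⟩)
    · have hc' : c = s := min_eq_right h
      have hd' : d = t₁ := max_eq_left h
      exact ode_zero_backward hcd hψcd hψdd hbound
        (by rw [hd']; exact h0) s (by rw [hc', hd']; exact ⟨le_rfl, h⟩)
  -- sign argument via intermediate value theorem
  have sign : ∀ s ∈ Ioo a b, deriv φ s₀ ≠ 0 → deriv φ s ≠ 0 := by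
    intro s hs hne h0
    exact hne (key s hs h0 s₀ hs₀)
  have ivt : ∀ s ∈ Ioo a b, 0 < deriv φ s₀ → 0 < deriv φ s := by
    intro s hs h
    by_contra hle
    push_neg at hle
    have huIcc : uIcc s s₀ ⊆ Ioo a b :=
      Set.ordConnected_Ioo.uIcc_subset hs hs₀
    have hcont : ContinuousOn (deriv φ) (uIcc s s₀) := hψc.mono huIcc
    have : (0 : ℝ) ∈ uIcc (deriv φ s) (deriv φ s₀) := by
      rw [mem_uIcc]; left; exact ⟨hle, le_of_lt h⟩
    obtain ⟨t, ht, h0⟩ := intermediate_value_uIcc hcont this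
    exact absurd (key t (huIcc ht) h0 s₀ hs₀) (ne_of_gt h)
  have ivt' : ∀ s ∈ Ioo a b, deriv φ s₀ < 0 → deriv φ s < 0 := by
    intro s hs h
    by_contra hle
    push_neg at hle
    have huIcc : uIcc s s₀ ⊆ Ioo a b :=
      Set.ordConnected_Ioo.uIcc_subset hs hs₀
    have hcont : ContinuousOn (deriv φ) (uIcc s s₀) := hψc.mono huIcc
    have : (0 : ℝ) ∈ uIcc (deriv φ s) (deriv φ s₀) := by
      rw [mem_uIcc]; right; exact ⟨le_of_lt h, hle⟩
    obtain ⟨t, ht, h0⟩ := intermediate_value_uIcc hcont this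
    exact absurd (key t (huIcc ht) h0 s₀ hs₀) (ne_of_lt h)
  refine ⟨fun h s hs => ivt s hs h, fun h s hs => ivt' s hs h, fun h s hs => ?_⟩
  -- constancy case
  have hzero : ∀ z ∈ Ioo a b, deriv φ z = 0 := key s₀ hs₀ h
  have hdiff : DifferentiableOn ℝ φ (Ioo a b) := hreg.differentiableOn (by norm_num)
  have hfz : ∀ z ∈ Ioo a b, fderivWithin ℝ φ (Ioo a b) z = 0 := by
    intro z hz
    rw [fderivWithin_of_isOpen hopen hz]
    have hd : DifferentiableAt ℝ φ z :=
      (hdiff z hz).differentiableAt (hopen.mem_nhds hz)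
    have : HasDerivAt φ 0 z := by
      have := hd.hasDerivAt
      rwa [hzero z hz] at this
    have hF := this.hasFDerivAt
    rw [hF.fderiv]
    exact ContinuousLinearMap.ext fun x => by simp
  exact (convex_Ioo a b).is_const_of_fderivWithin_eq_zero hdiff hfz hs hs₀
end

section
/- Let φ : ℝ → (0,∞) be a C² solution of φ'' = -φ'(1+(φ')²)·(n s / φ²) with φ'(0) = λ > 0. Then φ' > 0 everywhere (φ is strictly increasing), φ'' > 0 on (-∞,0) (φ is strictly convex there), and φ'' < 0 on (0,+∞) (φ is strictly concave there). -/
/-- A globally defined positive `C²` solution of the grim-reaper ODE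
`φ'' = -φ'(1+(φ')²)(n s/φ²)` in `ℍ^{n+1}` with `φ'(0) = λ > 0` is strictly
increasing (`φ' > 0` everywhere), strictly convex on `(-∞,0)` (`φ'' > 0` there)
and strictly concave on `(0,∞)` (`φ'' < 0` there). -/
theorem grim_reaper_ODE_positive_slope_monotone_convexity (n : ℕ) (hn : 2 ≤ n)
    (φ : ℝ → ℝ) (hreg : ContDiff ℝ 2 φ) (hpos : ∀ s, 0 < φ s)
    (hODE : ∀ s : ℝ, deriv (deriv φ) s =
      -(deriv φ s) * (1 + (deriv φ s) ^ 2) * ((n : ℝ) * s / (φ s) ^ 2))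
    (lam : ℝ) (hlam : 0 < lam) (h0 : deriv φ 0 = lam) :
    (∀ s : ℝ, 0 < deriv φ s) ∧
    (∀ s : ℝ, s < 0 → 0 < deriv (deriv φ) s) ∧
    (∀ s : ℝ, 0 < s → deriv (deriv φ) s < 0) := by
  have hC1 : ContDiff ℝ 1 (deriv φ) := by
    have h2 : ContDiff ℝ ((1 : ℕ) + 1) φ := by exact_mod_cast hreg
    exact_mod_cast (contDiff_succ_iff_deriv.mp h2).2.2
  have hψdiff : Differentiable ℝ (deriv φ) := hC1.differentiable one_ne_zero
  have hψcont : Continuous (deriv φ) := hψdiff.continuous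
  have hφcont : Continuous φ := hreg.continuous
  set h : ℝ → ℝ := fun s => -(1 + (deriv φ s) ^ 2) * ((n : ℝ) * s / (φ s) ^ 2) with hh
  have hhcont : Continuous h := by
    apply Continuous.mul
    · exact (continuous_const.add ((hψcont.pow 2))).neg
    · exact (continuous_const.mul continuous_id).div (hφcont.pow 2)
        (fun s => pow_ne_zero 2 (hpos s).ne')
  set H : ℝ → ℝ := fun s => ∫ t in (0:ℝ)..s, h t with hH
  have hHderiv : ∀ s, HasDerivAt H (h s) s := fun s =>
    (hhcont.integral_hasStrictDerivAt 0 s).hasDerivAt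
  set g : ℝ → ℝ := fun s => deriv φ s * Real.exp (-(H s)) with hg
  have hgderiv : ∀ s, HasDerivAt g 0 s := by
    intro s
    have h1 : HasDerivAt (deriv φ) (deriv (deriv φ) s) s := hψdiff s |>.hasDerivAt
    have h2 : HasDerivAt (fun s => Real.exp (-(H s))) (Real.exp (-(H s)) * (-(h s))) s :=
      ((hHderiv s).neg).exp
    have := h1.mul h2
    refine this.congr_deriv ?_
    rw [hODE s]
    ring
  have hgdiff : Differentiable ℝ g := fun s => (hgderiv s).differentiableAt
  have hgconst : ∀ s, g s = g 0 := fun s =>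
    is_const_of_deriv_eq_zero hgdiff (fun x => (hgderiv x).deriv) s 0
  have hψpos : ∀ s, 0 < deriv φ s := by
    intro s
    have hgs : deriv φ s * Real.exp (-(H s)) = lam := by
      have := hgconst s
      simp only [hg] at this
      rw [this, h0]
      have : H 0 = 0 := by simp [hH]
      rw [this]
      simp
    have hexp : 0 < Real.exp (-(H s)) := Real.exp_pos _
    nlinarith
  refine ⟨hψpos, ?_, ?_⟩
  · intro s hs
    rw [hODE s]
    have h1 : (n : ℝ) * s / (φ s) ^ 2 < 0 := by
      apply div_neg_of_neg_of_pos
      · have hn0 : (0:ℝ) < n := by exact_mod_cast Nat.pos_of_ne_zero (by omega)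
        exact mul_neg_of_pos_of_neg hn0 hs
      · exact pow_pos (hpos s) 2
    have h2 := hψpos s
    have hsq : (0:ℝ) < 1 + deriv φ s ^ 2 := by positivity
    nlinarith [mul_pos (mul_pos h2 hsq) (neg_pos.mpr h1)]
  · intro s hs
    rw [hODE s]
    have h1 : 0 < (n : ℝ) * s / (φ s) ^ 2 := by
      have hn0 : (0:ℝ) < n := by exact_mod_cast Nat.pos_of_ne_zero (by omega)
      exact div_pos (mul_pos hn0 hs) (pow_pos (hpos s) 2)
    have h2 := hψpos s
    have hsq : (0:ℝ) < 1 + deriv φ s ^ 2 := by positivity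
    nlinarith [mul_pos (mul_pos h2 hsq) h1]
end

section
/- Let φ : ℝ → (0,∞) be a C² solution of φ'' = -φ'(1+(φ')²)·(n s / φ²) with φ'(0) > 0. Then φ has finite limits λ⁻ = lim_{s→-∞} φ(s) and λ⁺ = lim_{s→+∞} φ(s), with 0 < λ⁻ < φ(0) < λ⁺ < +∞. -/
open Filter intervalIntegral

set_option maxHeartbeats 1000000

/-- A globally defined positive `C²` solution of the grim-reaper ODE
`φ'' = -φ'(1+(φ')²)(n s/φ²)` in `ℍ^{n+1}` with `φ'(0) > 0` has finite limits
`λ⁻ = lim_{s→-∞} φ` and `λ⁺ = lim_{s→+∞} φ`, with `0 < λ⁻ < φ(0) < λ⁺ < ∞`. -/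
theorem grim_reaper_ODE_finite_limits (n : ℕ) (hn : 2 ≤ n)
    (φ : ℝ → ℝ) (hreg : ContDiff ℝ 2 φ) (hpos : ∀ s, 0 < φ s)
    (hODE : ∀ s : ℝ, deriv (deriv φ) s =
      -(deriv φ s) * (1 + (deriv φ s) ^ 2) * ((n : ℝ) * s / (φ s) ^ 2))
    (h0 : 0 < deriv φ 0) :
    ∃ lamMinus lamPlus : ℝ,
      Tendsto φ atBot (nhds lamMinus) ∧ Tendsto φ atTop (nhds lamPlus) ∧
      0 < lamMinus ∧ lamMinus < φ 0 ∧ φ 0 < lamPlus := by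
  have hn' : (2:ℝ) ≤ (n:ℝ) := by exact_mod_cast hn
  have hnpos : (0:ℝ) < n := by linarith
  set p : ℝ → ℝ := deriv φ with hp_def
  have hφ_diff : Differentiable ℝ φ := hreg.differentiable two_ne_zero
  have hφ_deriv : ∀ s, HasDerivAt φ (p s) s := fun s => (hφ_diff s).hasDerivAt
  have hφ_cont : Continuous φ := hφ_diff.continuous
  have hp_cont : Continuous p := hreg.continuous_deriv one_le_two
  have hp_diff : Differentiable ℝ p := by
    have h2 : ContDiff ℝ ((1:WithTop ℕ∞)+1) φ := by norm_num; exact hreg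
    exact ((contDiff_succ_iff_deriv.mp h2).2.2).differentiable one_ne_zero
  set A : ℝ → ℝ := fun s => -(1 + p s ^ 2) * ((n:ℝ) * s / φ s ^ 2) with hA_def
  have hA_cont : Continuous A := by
    apply Continuous.mul
    · exact ((continuous_const.add (hp_cont.pow 2))).neg
    · exact ((continuous_const.mul continuous_id)).div (hφ_cont.pow 2)
        (fun s => pow_ne_zero 2 (hpos s).ne')
  have hp_hasDeriv : ∀ s, HasDerivAt p (A s * p s) s := by
    intro s
    have h1 := (hp_diff s).hasDerivAt
    have h2 : deriv p s = A s * p s := by rw [hp_def, hODE s, hA_def]; ring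
    rwa [h2] at h1
  set F : ℝ → ℝ := fun s => ∫ t in (0:ℝ)..s, A t with hF_def
  have hF : ∀ s, HasDerivAt F (A s) s := fun s =>
    integral_hasDerivAt_right (hA_cont.intervalIntegrable 0 s)
      (hA_cont.stronglyMeasurableAtFilter _ _) hA_cont.continuousAt
  -- p s = p 0 * exp (F s)
  have key : ∀ s, p s = p 0 * Real.exp (F s) := by
    have hg : ∀ s, HasDerivAt (fun t => p t * Real.exp (-F t)) 0 s := by
      intro s
      have h1 := (hp_hasDeriv s).mul ((hF s).neg.exp)
      convert h1 using 1
      · rfl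
      · rfl
      · rfl
      · ring
    have hconst := is_const_of_deriv_eq_zero (fun t => (hg t).differentiableAt)
      (fun t => (hg t).deriv)
    intro s
    have h2 := hconst s 0
    have hF0 : F 0 = 0 := integral_same
    simp only [hF0, neg_zero, Real.exp_zero, mul_one] at h2
    rw [← h2, Real.exp_neg]
    field_simp
  have ppos : ∀ s, 0 < p s := by
    intro s; rw [key s]; positivity
  have hmono : StrictMono φ := strictMono_of_deriv_pos ppos
  have hFTC : ∀ a b : ℝ, (∫ t in a..b, p t) = φ b - φ a := fun a b =>
    integral_deriv_eq_sub (fun x _ => hφ_diff x) (hp_cont.intervalIntegrable a b)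
  have hFsub : ∀ a b : ℝ, F b - F a = ∫ t in a..b, A t := fun a b =>
    integral_interval_sub_left (hA_cont.intervalIntegrable 0 b) (hA_cont.intervalIntegrable 0 a)
  have ptrans : ∀ a b : ℝ, p b = p a * Real.exp (∫ t in a..b, A t) := by
    intro a b
    rw [← hFsub a b, key a, key b, mul_assoc, ← Real.exp_add]
    ring_nf
  -- sign of A
  have hA_nonneg : ∀ u : ℝ, u ≤ 0 → 0 ≤ A u := by
    intro u hu
    have h1 : (n:ℝ) * u / φ u ^ 2 ≤ 0 :=
      div_nonpos_of_nonpos_of_nonneg (mul_nonpos_of_nonneg_of_nonpos hnpos.le hu) (by positivity)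
    show (0:ℝ) ≤ -(1 + p u ^ 2) * ((n:ℝ) * u / φ u ^ 2)
    nlinarith [sq_nonneg (p u)]
  have hA_nonpos : ∀ u : ℝ, 0 ≤ u → A u ≤ 0 := by
    intro u hu
    have h1 : 0 ≤ (n:ℝ) * u / φ u ^ 2 := by positivity
    show -(1 + p u ^ 2) * ((n:ℝ) * u / φ u ^ 2) ≤ 0
    nlinarith [sq_nonneg (p u)]
  -- p ≤ p 0 everywhere
  have hFnonpos : ∀ s, F s ≤ 0 := by
    intro s
    rcases le_total 0 s with h|h
    · have h1 : 0 ≤ ∫ t in (0:ℝ)..s, -A t :=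
        integral_nonneg h (fun u hu => neg_nonneg.mpr (hA_nonpos u hu.1))
      rw [integral_neg] at h1
      show (∫ t in (0:ℝ)..s, A t) ≤ 0
      linarith
    · show (∫ t in (0:ℝ)..s, A t) ≤ 0
      rw [integral_symm s 0, neg_nonpos]
      exact integral_nonneg h (fun u hu => hA_nonneg u hu.2)
  have ple : ∀ s, p s ≤ p 0 := by
    intro s
    rw [key s]
    nlinarith [Real.exp_le_one_iff.mpr (hFnonpos s), Real.exp_pos (F s), h0]
  -- linear upper bound for s ≥ 0
  have hlin : ∀ s : ℝ, 0 ≤ s → φ s ≤ φ 0 + p 0 * s := by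
    intro s hs
    have h1 : (∫ t in (0:ℝ)..s, p t) ≤ ∫ t in (0:ℝ)..s, p 0 :=
      integral_mono_on hs (hp_cont.intervalIntegrable 0 s) intervalIntegrable_const
        (fun t _ => ple t)
    rw [hFTC 0 s, integral_const, smul_eq_mul] at h1
    nlinarith [h1]
  -- φ bounded above
  have hub : ∃ M : ℝ, ∀ s, φ s ≤ M := by
    by_cases hcase : ∀ s, 0 ≤ s → φ s ≤ 2 * φ 0
    · refine ⟨2 * φ 0, fun s => ?_⟩
      rcases le_total s 0 with h|h
      · have := hmono.monotone h
        linarith [hpos 0]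
      · exact hcase s h
    · push_neg at hcase
      obtain ⟨σ, hσ0, hσφ⟩ := hcase
      set c : ℝ := (n:ℝ) / (2 * p 0) with hc_def
      have hc_pos : 0 < c := by positivity
      set G : ℝ → ℝ := fun t => p t + c * Real.log (φ t) with hG_def
      have hG : ∀ x, HasDerivAt G (A x * p x + c * (p x / φ x)) x := fun x =>
        (hp_hasDeriv x).add (((hφ_deriv x).log (hpos x).ne').const_mul c)
      have hGd : ∀ x ∈ interior (Set.Ici σ), deriv G x ≤ 0 := by
        rw [interior_Ici]
        intro x hx
        rw [(hG x).deriv]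
        have hx0 : (0:ℝ) < x := lt_of_le_of_lt hσ0 hx
        have hφx : 2 * φ 0 < φ x := lt_of_lt_of_le hσφ (hmono.monotone (le_of_lt hx))
        have hl := hlin x hx0.le
        have h1 : φ x ≤ 2 * p 0 * x := by linarith
        have h2 : c * φ x ≤ (n:ℝ) * x := by
          rw [hc_def, div_mul_eq_mul_div, div_le_iff₀ (by positivity)]
          nlinarith [h0, hnpos]
        have h3 : c / φ x ≤ (n:ℝ) * x / φ x ^ 2 := by
          rw [div_le_div_iff₀ (hpos x) (pow_pos (hpos x) 2)]
          nlinarith [mul_le_mul_of_nonneg_right h2 (hpos x).le]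
        have h4 : (n:ℝ) * x / φ x ^ 2 ≤ (1 + p x ^ 2) * ((n:ℝ) * x / φ x ^ 2) :=
          le_mul_of_one_le_left (by positivity) (by nlinarith [sq_nonneg (p x)])
        have hkey : c / φ x ≤ (1 + p x ^ 2) * ((n:ℝ) * x / φ x ^ 2) := h3.trans h4
        have h5 := mul_le_mul_of_nonneg_right hkey (ppos x).le
        have hrw : c * (p x / φ x) = c / φ x * p x := by ring
        show -(1 + p x ^ 2) * ((n:ℝ) * x / φ x ^ 2) * p x + c * (p x / φ x) ≤ 0
        rw [hrw]
        nlinarith [h5]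
      have hGanti : AntitoneOn G (Set.Ici σ) :=
        antitoneOn_of_deriv_nonpos (convex_Ici σ)
          (fun x _ => (hG x).differentiableAt.continuousAt.continuousWithinAt)
          (fun x _ => (hG x).differentiableAt.differentiableWithinAt) hGd
      refine ⟨Real.exp (p 0 / c) * φ σ, fun s => ?_⟩
      rcases le_total s σ with h|h
      · have h1 : φ s ≤ φ σ := hmono.monotone h
        have h2 : 1 ≤ Real.exp (p 0 / c) := Real.one_le_exp (by positivity)
        nlinarith [hpos σ]
      · have h1 : G s ≤ G σ := hGanti Set.self_mem_Ici h h
        have h1' : p s + c * Real.log (φ s) ≤ p σ + c * Real.log (φ σ) := h1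
        have h2 : c * Real.log (φ s) ≤ p 0 + c * Real.log (φ σ) := by
          linarith [ppos s, ple σ]
        have h5 : c * (Real.log (φ s) - Real.log (φ σ)) ≤ p 0 := by linarith
        have h6 : Real.log (φ s) - Real.log (φ σ) ≤ p 0 / c := by
          rw [le_div_iff₀ hc_pos]
          linarith
        calc φ s = Real.exp (Real.log (φ s)) := (Real.exp_log (hpos s)).symm
          _ ≤ Real.exp (p 0 / c + Real.log (φ σ)) := by
              rw [Real.exp_le_exp]; linarith
          _ = Real.exp (p 0 / c) * φ σ := by rw [Real.exp_add, Real.exp_log (hpos σ)]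
  -- negative-side decay estimate
  have hneg : ∀ s₁ : ℝ, s₁ ≤ -1 → ∀ s, s ≤ s₁ →
      (n:ℝ) * (φ s₁ - φ s) ≤ p s₁ * φ s₁ ^ 2 := by
    intro s₁ hs₁ s hs
    set c : ℝ := (n:ℝ) / φ s₁ ^ 2 with hc_def
    have hc_pos : 0 < c := by
      rw [hc_def]; exact div_pos hnpos (pow_pos (hpos s₁) 2)
    have hpt : ∀ t ∈ Set.Icc s s₁, p t ≤ p s₁ * Real.exp (c * (t - s₁)) := by
      intro t ht
      have hAge : ∀ u ∈ Set.Icc t s₁, c ≤ A u := by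
        intro u hu
        have hu1 : u ≤ -1 := le_trans hu.2 hs₁
        have hφu : φ u ≤ φ s₁ := hmono.monotone hu.2
        have h1 : (n:ℝ) / φ s₁ ^ 2 ≤ (n:ℝ) * (-u) / φ u ^ 2 := by
          apply div_le_div₀ (by nlinarith) (by nlinarith) (pow_pos (hpos u) 2)
            (by nlinarith [hpos u, hpos s₁])
        have hXpos : (0:ℝ) < (n:ℝ) * (-u) / φ u ^ 2 := lt_of_lt_of_le hc_pos h1
        show c ≤ -(1 + p u ^ 2) * ((n:ℝ) * u / φ u ^ 2)
        have h2 : -(1 + p u ^ 2) * ((n:ℝ) * u / φ u ^ 2)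
            = (1 + p u ^ 2) * ((n:ℝ) * (-u) / φ u ^ 2) := by ring
        rw [h2, hc_def]
        nlinarith [mul_nonneg (sq_nonneg (p u)) hXpos.le]
      have hint : c * (s₁ - t) ≤ ∫ u in t..s₁, A u := by
        have h3 := integral_mono_on ht.2
          (intervalIntegrable_const : IntervalIntegrable (fun _ => c) MeasureTheory.volume t s₁)
          (hA_cont.intervalIntegrable t s₁) hAge
        rwa [integral_const, smul_eq_mul, mul_comm] at h3
      rw [ptrans s₁ t, integral_symm t s₁]
      have h4 : Real.exp (-∫ u in t..s₁, A u) ≤ Real.exp (c * (t - s₁)) := by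
        rw [Real.exp_le_exp]; linarith
      exact mul_le_mul_of_nonneg_left h4 (ppos s₁).le
    have h1 : (∫ t in s..s₁, p t) ≤ ∫ t in s..s₁, p s₁ * Real.exp (c * (t - s₁)) :=
      integral_mono_on hs (hp_cont.intervalIntegrable _ _)
        ((continuous_const.mul (Real.continuous_exp.comp
          ((continuous_const.mul (continuous_id.sub continuous_const))))).intervalIntegrable _ _)
        hpt
    have h2 : (∫ t in s..s₁, Real.exp (c * (t - s₁)))
        = (Real.exp (c * (s₁ - s₁)) - Real.exp (c * (s - s₁))) / c := by
      have hH : ∀ t : ℝ, HasDerivAt (fun u => Real.exp (c * (u - s₁)) / c)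
          (Real.exp (c * (t - s₁))) t := by
        intro t
        have h3 : HasDerivAt (fun u : ℝ => c * (u - s₁)) c t := by
          simpa using ((hasDerivAt_id t).sub_const s₁).const_mul c
        have h4 := h3.exp.div_const c
        convert h4 using 1
        · rfl
        · rfl
        · rw [mul_div_assoc, div_self hc_pos.ne', mul_one]
      rw [integral_eq_sub_of_hasDerivAt (fun t _ => hH t)
        ((Real.continuous_exp.comp
          (continuous_const.mul (continuous_id.sub continuous_const))).intervalIntegrable s s₁)]
      ring
    have h3 : (∫ t in s..s₁, p s₁ * Real.exp (c * (t - s₁)))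
        = p s₁ * ∫ t in s..s₁, Real.exp (c * (t - s₁)) := integral_const_mul _ _
    have h4 : (∫ t in s..s₁, Real.exp (c * (t - s₁))) ≤ 1 / c := by
      rw [h2, sub_self, mul_zero, Real.exp_zero]
      have h5 := Real.exp_nonneg (c * (s - s₁))
      exact (div_le_div_iff_of_pos_right hc_pos).mpr (by linarith)
    rw [hFTC s s₁, h3] at h1
    have h6 : p s₁ * (1 / c) = p s₁ * φ s₁ ^ 2 / n := by
      rw [hc_def, one_div_div]; ring
    have h7 : p s₁ * (∫ t in s..s₁, Real.exp (c * (t - s₁))) ≤ p s₁ * (1 / c) :=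
      mul_le_mul_of_nonneg_left h4 (ppos s₁).le
    have h8 : φ s₁ - φ s ≤ p s₁ * φ s₁ ^ 2 / n := by
      rw [← h6]; linarith
    have h9 : (n:ℝ) * (p s₁ * φ s₁ ^ 2 / n) = p s₁ * φ s₁ ^ 2 := by
      field_simp
    nlinarith [mul_le_mul_of_nonneg_left h8 hnpos.le]
  -- φ bounded below by a positive constant
  have hlb : ∃ b : ℝ, 0 < b ∧ ∀ s, b ≤ φ s := by
    by_cases hc2 : ∃ s₁, s₁ ≤ -1 ∧ φ s₁ ≤ (n:ℝ) / (2 * p 0)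
    · obtain ⟨s₁, h1, h2⟩ := hc2
      have h2' : 2 * p 0 * φ s₁ ≤ (n:ℝ) := by
        rw [le_div_iff₀ (by positivity)] at h2
        linarith
      refine ⟨φ s₁ / 2, by linarith [hpos s₁], fun s => ?_⟩
      rcases le_total s s₁ with h|h
      · have h3 := hneg s₁ h1 s h
        have h4 : p s₁ ≤ p 0 := ple s₁
        nlinarith [hpos s₁, hpos s, ppos s₁, h0,
          mul_le_mul_of_nonneg_right h4 (sq_nonneg (φ s₁)),
          mul_le_mul_of_nonneg_right h2' (hpos s₁).le]
      · linarith [hmono.monotone h, hpos s₁]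
    · push_neg at hc2
      refine ⟨min ((n:ℝ) / (2 * p 0)) (φ (-1)), lt_min (by positivity) (hpos _), fun s => ?_⟩
      rcases le_total s (-1) with h|h
      · exact le_trans (min_le_left _ _) (hc2 s h).le
      · exact le_trans (min_le_right _ _) (hmono.monotone h)
  obtain ⟨M, hM⟩ := hub
  obtain ⟨b, hb0, hb⟩ := hlb
  have hbdda : BddAbove (Set.range φ) := ⟨M, by rintro _ ⟨s, rfl⟩; exact hM s⟩
  have hbddb : BddBelow (Set.range φ) := ⟨b, by rintro _ ⟨s, rfl⟩; exact hb s⟩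
  refine ⟨⨅ s, φ s, ⨆ s, φ s, tendsto_atBot_ciInf hmono.monotone hbddb,
    tendsto_atTop_ciSup hmono.monotone hbdda, ?_, ?_, ?_⟩
  · exact lt_of_lt_of_le hb0 (le_ciInf hb)
  · exact lt_of_le_of_lt (ciInf_le hbddb (-1)) (hmono (by norm_num : (-1:ℝ) < 0))
  · exact lt_of_lt_of_le (hmono (by norm_num : (0:ℝ) < 1)) (le_ciSup hbdda 1)
end
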